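/- arXiv:1910.12342 — 2 statements merged into one kernel-verified Lean document; each statement's English description precedes it below -/
import Mathlib

section
/- The optimal value of minimize (aᵀx)² − n/4 + Σᵢ (min{xᵢ², 1/4} + min{(xᵢ−1)², 1/4}) subject to 𝟙ᵀx ≥ 1 is zero if and only if there exists x with xᵢ ∈ {0,1} for all i, Σᵢ xᵢ ≥ 1, and aᵀx = 0. -/
/-!
Each coordinate contributes at least `1/4` to the penalty sum, with equality exactly at `0` and
`1`, so the objective is `(aᵀx)²` plus a nonnegative slack, and a `0/1` solution of `aᵀx = 0`
attains the value `0`. Conversely, if the infimum is `0`, take a feasible `x` of objective below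
`δ²` for a small `δ`: then `|aᵀx| < δ` and every coordinate is `δ`-close to `0` or `1`. Rounding
moves `𝟙ᵀx` by less than `1` and `aᵀx` by less than `1 - δ`; both rounded quantities are
integers, so `𝟙ᵀy ≥ 1` and `aᵀy = 0`.
-/

open Finset

namespace SubsetSumReduction

noncomputable def penalty (z : ℝ) : ℝ := min (z ^ 2) (1 / 4) + min ((z - 1) ^ 2) (1 / 4)

theorem quarter_le_penalty (z : ℝ) : 1 / 4 ≤ penalty z := by
  unfold penalty
  rcases le_total z (1 / 2) with hz | hz
  · rw [min_eq_right (a := (z - 1) ^ 2) (b := (1 : ℝ) / 4) (by nlinarith)]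
    linarith [le_min (sq_nonneg z) (by norm_num : (0 : ℝ) ≤ 1 / 4)]
  · rw [min_eq_right (a := z ^ 2) (b := (1 : ℝ) / 4) (by nlinarith)]
    linarith [le_min (sq_nonneg (z - 1)) (by norm_num : (0 : ℝ) ≤ 1 / 4)]

theorem penalty_eq_quarter {z : ℝ} (hz : z = 0 ∨ z = 1) : penalty z = 1 / 4 := by
  rcases hz with rfl | rfl <;> norm_num [penalty]

theorem exists_int_near_of_penalty_lt {z ε : ℝ} (hε₀ : 0 ≤ ε) (hε : ε ≤ 1 / 2)
    (h : penalty z < 1 / 4 + ε ^ 2) : ∃ b : ℤ, (b = 0 ∨ b = 1) ∧ |z - b| < ε := by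
  have hε2 : ¬ 1 / 4 < ε ^ 2 := by nlinarith
  unfold penalty at h
  rcases le_total z (1 / 2) with hz | hz
  · rw [min_eq_right (a := (z - 1) ^ 2) (b := (1 : ℝ) / 4) (by nlinarith)] at h
    have : z ^ 2 < ε ^ 2 := (min_lt_iff.1 (by linarith)).resolve_right hε2
    exact ⟨0, Or.inl rfl, by simpa using abs_lt_of_sq_lt_sq this hε₀⟩
  · rw [min_eq_right (a := z ^ 2) (b := (1 : ℝ) / 4) (by nlinarith)] at h
    have : (z - 1) ^ 2 < ε ^ 2 := (min_lt_iff.1 (by linarith)).resolve_right hε2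
    exact ⟨1, Or.inr rfl, by simpa using abs_lt_of_sq_lt_sq this hε₀⟩

section Rounding

variable {ι : Type*} [Fintype ι]

theorem abs_sum_mul_sub_sum_mul_le (c x y : ι → ℝ) {δ : ℝ} (h : ∀ i, |x i - y i| ≤ δ) :
    |∑ i, c i * x i - ∑ i, c i * y i| ≤ (∑ i, |c i|) * δ := by
  rw [← sum_sub_distrib, sum_mul]
  refine (abs_sum_le_sum_abs _ _).trans (sum_le_sum fun i _ => ?_)
  rw [← mul_sub, abs_mul]
  exact mul_le_mul_of_nonneg_left (h i) (abs_nonneg _)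

theorem one_le_sum_int_of_near {x : ι → ℝ} {k : ι → ℤ} {δ : ℝ} (hx : 1 ≤ ∑ i, x i)
    (hk : ∀ i, |x i - k i| ≤ δ) (hδ : Fintype.card ι * δ < 1) : 1 ≤ ∑ i, k i := by
  have hdist := abs_sum_mul_sub_sum_mul_le 1 x (fun i => k i) hk
  simp only [Pi.one_apply, one_mul, abs_one, sum_const, card_univ, nsmul_eq_mul,
    mul_one] at hdist
  have hpos : (0 : ℝ) < ∑ i, (k i : ℝ) := by linarith [(abs_le.1 hdist).2]
  have : 0 < ∑ i, k i := by exact_mod_cast hpos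
  omega

theorem sum_mul_int_eq_zero_of_near (a : ι → ℤ) {x : ι → ℝ} {k : ι → ℤ} {δ : ℝ}
    (hax : |∑ i, (a i : ℝ) * x i| < δ) (hk : ∀ i, |x i - k i| ≤ δ)
    (hδ : (∑ i, |(a i : ℝ)| + 1) * δ ≤ 1) : ∑ i, a i * k i = 0 := by
  have hdist := abs_sum_mul_sub_sum_mul_le (fun i => a i) x (fun i => k i) hk
  have hak : |∑ i, (a i : ℝ) * k i| < 1 := by
    linarith [abs_sub_abs_le_abs_sub (∑ i, (a i : ℝ) * k i) (∑ i, (a i : ℝ) * x i),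
      abs_sub_comm (∑ i, (a i : ℝ) * k i) (∑ i, (a i : ℝ) * x i)]
  exact Int.abs_lt_one_iff.1 (by exact_mod_cast hak)

end Rounding

noncomputable def objective {n : ℕ} (a : Fin n → ℤ) (x : Fin n → ℝ) : ℝ :=
  (∑ i, (a i : ℝ) * x i) ^ 2 - n / 4 + ∑ i, penalty (x i)

theorem objective_eq_sq_add_sum {n : ℕ} (a : Fin n → ℤ) (x : Fin n → ℝ) :
    objective a x = (∑ i, (a i : ℝ) * x i) ^ 2 + ∑ i, (penalty (x i) - 1 / 4) := by
  simp only [objective, sum_sub_distrib, sum_const, card_univ, Fintype.card_fin, nsmul_eq_mul]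
  ring

theorem objective_nonneg {n : ℕ} (a : Fin n → ℤ) (x : Fin n → ℝ) : 0 ≤ objective a x := by
  rw [objective_eq_sq_add_sum]
  exact add_nonneg (sq_nonneg _) (sum_nonneg fun i _ => sub_nonneg.2 (quarter_le_penalty _))

theorem objective_eq_zero {n : ℕ} (a : Fin n → ℤ) {x : Fin n → ℝ} (hx : ∀ i, x i = 0 ∨ x i = 1)
    (hax : ∑ i, (a i : ℝ) * x i = 0) : objective a x = 0 := by
  simp [objective_eq_sq_add_sum, hax, penalty_eq_quarter (hx _)]

theorem exists_zero_one_solution_of_objective_lt {n : ℕ} (a : Fin n → ℤ) {x : Fin n → ℝ}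
    {δ : ℝ} (hδ₀ : 0 < δ) (hδ : 2 * (n + ∑ i, |(a i : ℝ)| + 1) * δ ≤ 1)
    (hx : 1 ≤ ∑ i, x i) (hobj : objective a x < δ ^ 2) :
    ∃ y : Fin n → ℝ, (∀ i, y i = 0 ∨ y i = 1) ∧ 1 ≤ ∑ i, y i ∧ ∑ i, (a i : ℝ) * y i = 0 := by
  have hnδ : 0 ≤ n * δ := by positivity
  have hAδ : 0 ≤ (∑ i, |(a i : ℝ)|) * δ := by positivity
  have hslack (i : Fin n) : 0 ≤ penalty (x i) - 1 / 4 := sub_nonneg.2 (quarter_le_penalty _)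
  rw [objective_eq_sq_add_sum] at hobj
  have hsq := sq_nonneg (∑ i, (a i : ℝ) * x i)
  have hax : |∑ i, (a i : ℝ) * x i| < δ := by
    have := sum_nonneg fun i (_ : i ∈ univ) => hslack i
    exact abs_lt_of_sq_lt_sq (by linarith) hδ₀.le
  have hnear (i : Fin n) : ∃ b : ℤ, (b = 0 ∨ b = 1) ∧ |x i - b| < δ := by
    have := single_le_sum (fun j _ => hslack j) (mem_univ i)
    exact exists_int_near_of_penalty_lt hδ₀.le (by nlinarith) (by linarith)
  choose k hk01 hkx using hnear
  have hk_one := one_le_sum_int_of_near hx (fun i => (hkx i).le) (by simp; linarith)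
  have hak := sum_mul_int_eq_zero_of_near a hax (fun i => (hkx i).le) (by linarith)
  exact ⟨fun i => k i, fun i => by rcases hk01 i with h | h <;> simp [h],
    by beta_reduce; exact_mod_cast hk_one, by beta_reduce; exact_mod_cast hak⟩

end SubsetSumReduction

open SubsetSumReduction in
/-- The optimal value of the subset-sum reduction problem
`minimize (aᵀx)² − n/4 + Σᵢ (min{xᵢ², 1/4} + min{(xᵢ−1)², 1/4})` subject to
`𝟙ᵀx ≥ 1` is zero iff there exists `x` with `xᵢ ∈ {0,1}`, `Σᵢ xᵢ ≥ 1`, `aᵀx = 0`. -/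
theorem subset_sum_reduction {n : ℕ} (a : Fin n → ℤ) :
    sInf {v : EReal | ∃ x : Fin n → ℝ, (1 : ℝ) ≤ ∑ i, x i ∧
        v = (((∑ i, (a i : ℝ) * x i) ^ 2 - n / 4 +
          ∑ i, (min ((x i) ^ 2) (1 / 4) + min ((x i - 1) ^ 2) (1 / 4)) : ℝ) : EReal)}
      = (0 : EReal) ↔
    ∃ x : Fin n → ℝ, (∀ i, x i = 0 ∨ x i = 1) ∧ (1 : ℝ) ≤ ∑ i, x i ∧
      ∑ i, (a i : ℝ) * x i = 0 := by
  change sInf {v : EReal | ∃ x : Fin n → ℝ, 1 ≤ ∑ i, x i ∧ v = (objective a x : EReal)} = 0 ↔ _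
  constructor
  · intro hinf
    set δ : ℝ := 1 / (2 * (n + ∑ i, |(a i : ℝ)| + 1))
    have hpos : 0 < 2 * ((n : ℝ) + ∑ i, |(a i : ℝ)| + 1) := by positivity
    have hlt : sInf {v : EReal | ∃ x : Fin n → ℝ, 1 ≤ ∑ i, x i ∧ v = (objective a x : EReal)}
        < ((δ ^ 2 : ℝ) : EReal) := by
      rw [hinf]
      exact_mod_cast (by positivity : (0 : ℝ) < δ ^ 2)
    obtain ⟨_, ⟨x, hx, rfl⟩, hobj⟩ := sInf_lt_iff.1 hlt
    exact exists_zero_one_solution_of_objective_lt a (δ := δ) (by positivity)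
      (by rw [mul_one_div_cancel hpos.ne']) hx (by exact_mod_cast hobj)
  · rintro ⟨x, hx01, hx, hax⟩
    refine le_antisymm (sInf_le ⟨x, hx, by rw [objective_eq_zero a hx01 hax]; rfl⟩) ?_
    refine le_sInf ?_
    rintro _ ⟨y, -, rfl⟩
    exact_mod_cast objective_nonneg a y
end

section
/- The scalar Huber function h_α(z) = z² for |z| ≤ α and h_α(z) = α(2|z| − α) for |z| > α is the supremum of all tangent lines of z ↦ z² taken at points z₀ with |z₀| ≤ α: h_α(z) = sup_{|z₀| ≤ α} (z₀² + 2z₀(z − z₀)). -/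
/-- The scalar Huber function is the supremum of tangent lines of `z ↦ z²` taken at
points `z₀` with `|z₀| ≤ α`:
`h_α z = sup_{|z₀| ≤ α} (z₀² + 2 z₀ (z − z₀))`. -/
theorem huber_eq_sup_tangent_lines (α : ℝ) (hα : 0 < α) (z : ℝ) :
    (if |z| ≤ α then z ^ 2 else α * (2 * |z| - α)) =
    sSup {w : ℝ | ∃ z₀ : ℝ, |z₀| ≤ α ∧ w = z₀ ^ 2 + 2 * z₀ * (z - z₀)} := by
  symm
  split_ifs with h
  · apply IsGreatest.csSup_eq
    constructor
    · exact ⟨z, h, by ring⟩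
    · rintro w ⟨z₀, hz₀, rfl⟩
      nlinarith [sq_nonneg (z - z₀)]
  · push_neg at h
    apply IsGreatest.csSup_eq
    constructor
    · refine ⟨if 0 ≤ z then α else -α, ?_, ?_⟩
      · split_ifs <;> simp [abs_of_pos hα, abs_of_nonpos, hα.le]
      · rcases le_or_gt 0 z with hz | hz
        · rw [if_pos hz, abs_of_nonneg hz]; ring
        · rw [if_neg (not_le.mpr hz), abs_of_neg hz]; ring
    · rintro w ⟨z₀, hz₀, rfl⟩
      have h1 : z₀ * z ≤ |z₀| * |z| := le_trans (le_abs_self _) (by rw [abs_mul])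
      have h2 : |z₀| ≥ 0 := abs_nonneg _
      have h3 : z₀ ^ 2 = |z₀| ^ 2 := (sq_abs z₀).symm
      nlinarith [mul_nonneg (sub_nonneg.mpr hz₀) (sub_nonneg.mpr h.le)]
end
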